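/- arXiv:2001.02527 — 2 statements merged into one kernel-verified Lean document; each statement's English description precedes it below -/
import Mathlib

section
/- Under the finite-horizon discrete-time τ-memory N-dimensional Hawkes probability mass function ℙ on ({0,1}^N)^T, let t ∈ {1,…,T} and ΔT ≥ 1 with t + ΔT ≤ T, and let H ∈ ({0,1}^N)^t be a history with ℙ[X(1:t) = H] > 0 such that H has an event at time t, with spiking set I = {i : H_i(t) = 1} ≠ ∅ and pre-event state S ∈ {0,1}^{τ×N} given by S_{r,c} = H_c(t − r) for 1 ≤ r ≤ τ (with H_c(u) = 0 for u ≤ 0). Then the conditional probability, given X(1:t) = H, that the smallest u > t with X(u) ≠ 0 equals t + ΔT is ( ∏_{i=1}^{N} ∏_{j=1}^{ΔT−1} (1 − σ(Λ^{(i)}(η(j, S, I)))) ) · ( 1 − ∏_{i=1}^{N} (1 − σ(Λ^{(i)}(η(ΔT, S, I)))) ), where Λ^{(i)}(S') = λ_i + Σ_{j=1}^{N} Σ_{r=1}^{τ} S'_{r,j} ν_{i,j}(r) is the intensity determined by a state S' ∈ {0,1}^{τ×N}. -/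
open Finset

/-- The sigmoid function `σ(a) = 1/(1 + e^{−a})`. -/
noncomputable def sigm (a : ℝ) : ℝ := (1 + Real.exp (-a))⁻¹

/-- The intensity `λ^{(i)}(t|X) = λ_i + Σ_j Σ_{t' < t, X_j(t') = 1} ν_{i,j}(t − t')` of trace `i`
at time `t` given the history encoded in the binary array `X` (times indexed by `Fin T`,
index `t` standing for time `t+1`; only values of `X` at times `t' < t` are used). -/
noncomputable def intensity (N T : ℕ) (lam : Fin N → ℝ) (ν : Fin N → Fin N → ℤ → ℝ)
    (t : Fin T) (X : Fin T → Fin N → Bool) (i : Fin N) : ℝ :=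
  lam i + ∑ j : Fin N,
    ∑ t' ∈ Finset.univ.filter (fun t' : Fin T => t' < t ∧ X t' j = true),
      ν i j ((t : ℤ) - (t' : ℤ))

/-- The finite-horizon discrete-time `τ`-memory `N`-dimensional Hawkes probability mass function
on `({0,1}^N)^T`. -/
noncomputable def hawkesP (N T : ℕ) (lam : Fin N → ℝ) (ν : Fin N → Fin N → ℤ → ℝ)
    (X : Fin T → Fin N → Bool) : ℝ :=
  ∏ t : Fin T, ∏ i : Fin N,
    if X t i = true then sigm (intensity N T lam ν t X i)
    else 1 - sigm (intensity N T lam ν t X i)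

/-- The `τ×τ` lower shift matrix `D`. -/
def shiftD (τ : ℕ) : Matrix (Fin τ) (Fin τ) ℤ :=
  Matrix.of fun r c => if (r : ℕ) = (c : ℕ) + 1 then 1 else 0

/-- The `τ×N` indicator matrix `𝐈(I)`. -/
def indMat (τ N : ℕ) (I : Finset (Fin N)) : Matrix (Fin τ) (Fin N) ℤ :=
  Matrix.of fun r c => if (r : ℕ) = 0 ∧ c ∈ I then 1 else 0

/-- The state-update map `η(ΔT, S, I) = D^{ΔT−1}(D S + 𝐈(I))`. -/
def eta (τ N : ℕ) (ΔT : ℕ) (S : Matrix (Fin τ) (Fin N) ℤ) (I : Finset (Fin N)) :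
    Matrix (Fin τ) (Fin N) ℤ :=
  shiftD τ ^ (ΔT - 1) * (shiftD τ * S + indMat τ N I)

/-- The intensity `Λ^{(i)}(S') = λ_i + Σ_j Σ_{r=1}^{τ} S'_{r,j} ν_{i,j}(r)` determined by a state
`S' ∈ {0,1}^{τ×N}` (rows indexed by `Fin τ`, index `r` standing for lag `r+1`). -/
noncomputable def stateIntensity (τ N : ℕ) (lam : Fin N → ℝ) (ν : Fin N → Fin N → ℤ → ℝ)
    (S' : Matrix (Fin τ) (Fin N) ℤ) (i : Fin N) : ℝ :=
  lam i + ∑ j : Fin N, ∑ r : Fin τ, (S' r j : ℝ) * ν i j ((r : ℤ) + 1)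

/-! The Hawkes law is a product of one-step kernels `p u X b`, the Bernoulli law of the event
vector `b` at time `u`; each kernel depends only on the past of `X` and sums to one over `b`.
Summing out the future therefore gives `ℙ[X agrees with Y before m] = ∏_{u < m} p u Y (Y u)`.
With `Z` the continuation of `H` by silence, the event of the theorem is
`{X agrees with Z before a} \ {X agrees with Z up to a}` for `a = t + ΔT − 1`, so its conditional
probability is the product of the silent factors over the waiting window times
`1 − (silent factor at a)`. Along `Z` a silent step acts on the lag state by the shift `D` and an
event step by `D · + 𝐈(I)`, so the state at time `t + j − 1` is `η(j, S, I)`; since `ν` vanishes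
outside lags `1, …, τ`, the intensity is `Λ` of that state. -/

section ChainRule

variable {β R : Type*} [Fintype β] [DecidableEq β] {T : ℕ}

def IsCausal {γ : Type*} (p : Fin T → (Fin T → β) → γ) : Prop :=
  ∀ u X Y, (∀ s, s < u → X s = Y s) → p u X = p u Y

lemma filter_val_lt_succ_eq_insert {m : ℕ} (hm : m < T) :
    univ.filter (fun u : Fin T => (u : ℕ) < m + 1) =
      insert ⟨m, hm⟩ (univ.filter fun u : Fin T => (u : ℕ) < m) := by
  ext u
  simp only [mem_filter, mem_univ, true_and, mem_insert, Fin.ext_iff]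
  omega

lemma prod_filter_val_lt_mul_prod_filter {M : Type*} [CommMonoid M] {t a : ℕ} (hta : t ≤ a)
    (f : Fin T → M) :
    (∏ u ∈ univ.filter (fun u : Fin T => (u : ℕ) < t), f u) *
        ∏ u ∈ univ.filter (fun u : Fin T => t ≤ (u : ℕ) ∧ (u : ℕ) < a), f u =
      ∏ u ∈ univ.filter (fun u : Fin T => (u : ℕ) < a), f u := by
  rw [← prod_filter_mul_prod_filter_not (univ.filter fun u : Fin T => (u : ℕ) < a)
    fun u : Fin T => (u : ℕ) < t, filter_filter, filter_filter]
  congr 2 <;> refine filter_congr fun u _ => ?_ <;> omega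

omit [Fintype β] [DecidableEq β] in
lemma prod_filter_val_lt_congr [CommMonoid R] {p : Fin T → (Fin T → β) → β → R}
    (hp : IsCausal p) {m : ℕ} {X Y : Fin T → β} (h : ∀ u : Fin T, (u : ℕ) < m → X u = Y u) :
    ∏ u ∈ univ.filter (fun u : Fin T => (u : ℕ) < m), p u X (X u) =
      ∏ u ∈ univ.filter (fun u : Fin T => (u : ℕ) < m), p u Y (Y u) := by
  refine prod_congr rfl fun u hu => ?_
  have hum : (u : ℕ) < m := (mem_filter.1 hu).2
  rw [h u hum, hp u X Y fun s hs => h s (lt_trans (Fin.lt_def.1 hs) hum)]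

lemma filter_agreeBelow_filter_eq_update (a : Fin T) (Y : Fin T → β) (b : β) :
    (univ.filter fun X : Fin T → β => ∀ u : Fin T, (u : ℕ) < a → X u = Y u).filter
        (fun X => X a = b) =
      univ.filter fun X : Fin T → β =>
        ∀ u : Fin T, (u : ℕ) < a + 1 → X u = Function.update Y a b u := by
  ext X
  simp only [mem_filter, mem_univ, true_and, Function.update_apply]
  constructor
  · rintro ⟨hY, hb⟩ u hu
    split_ifs with hua
    · rwa [hua]
    · exact hY u (by have := Fin.val_ne_of_ne hua; omega)
  · intro h
    refine ⟨fun u hu => ?_, by simpa using h a (by omega)⟩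
    rw [h u (by omega), if_neg (Fin.ne_of_val_ne hu.ne)]

theorem sum_filter_agreeBelow_prod [CommSemiring R] {p : Fin T → (Fin T → β) → β → R}
    (hp : IsCausal p) (hnorm : ∀ u X, ∑ b, p u X b = 1) (m : ℕ) (Y : Fin T → β) :
    ∑ X ∈ univ.filter (fun X : Fin T → β => ∀ u : Fin T, (u : ℕ) < m → X u = Y u),
        ∏ u, p u X (X u) =
      ∏ u ∈ univ.filter (fun u : Fin T => (u : ℕ) < m), p u Y (Y u) := by
  induction hk : T - m generalizing m Y with
  | zero =>
    have hall : ∀ u : Fin T, (u : ℕ) < m := fun u => by omega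
    have hY : univ.filter (fun X : Fin T → β => ∀ u : Fin T, (u : ℕ) < m → X u = Y u) = {Y} := by
      ext X
      simp [hall, funext_iff]
    rw [hY, sum_singleton, filter_true_of_mem fun u _ => hall u]
  | succ k ih =>
    have hm : m < T := by omega
    set um : Fin T := ⟨m, hm⟩
    rw [← sum_fiberwise _ (fun X => X um)]
    calc ∑ b, ∑ X ∈ _ with X um = b, ∏ u, p u X (X u)
        = ∑ b, ∏ u ∈ univ.filter (fun u : Fin T => (u : ℕ) < m + 1),
            p u (Function.update Y um b) (Function.update Y um b u) :=
          sum_congr rfl fun b _ => by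
            rw [filter_agreeBelow_filter_eq_update]
            exact ih (m + 1) _ (by omega)
      _ = ∑ b, p um Y b * ∏ u ∈ univ.filter (fun u : Fin T => (u : ℕ) < m), p u Y (Y u) := by
          refine sum_congr rfl fun b _ => ?_
          have hagree : ∀ u : Fin T, (u : ℕ) < m → Function.update Y um b u = Y u :=
            fun u hu => Function.update_of_ne (Fin.ne_of_val_ne hu.ne) _ _
          rw [filter_val_lt_succ_eq_insert hm, prod_insert (by simp),
            Function.update_self, hp um _ Y fun s hs => hagree s hs,
            prod_filter_val_lt_congr hp hagree]
      _ = _ := by rw [← sum_mul, hnorm, one_mul]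

theorem sum_filter_agreeBelow_ne [CommRing R] {p : Fin T → (Fin T → β) → β → R}
    (hp : IsCausal p) (hnorm : ∀ u X, ∑ b, p u X b = 1) (a : Fin T) (Y : Fin T → β) :
    ∑ X ∈ univ.filter (fun X : Fin T → β => (∀ u : Fin T, (u : ℕ) < a → X u = Y u) ∧ X a ≠ Y a),
        ∏ u, p u X (X u) =
      (∏ u ∈ univ.filter (fun u : Fin T => (u : ℕ) < a), p u Y (Y u)) * (1 - p a Y (Y a)) := by
  have hsplit := sum_filter_add_sum_filter_not
    (univ.filter fun X : Fin T → β => ∀ u : Fin T, (u : ℕ) < a → X u = Y u)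
    (fun X => X a = Y a) fun X => ∏ u, p u X (X u)
  rw [filter_agreeBelow_filter_eq_update, Function.update_eq_self, filter_filter] at hsplit
  rw [eq_sub_of_add_eq' hsplit,
    sum_filter_agreeBelow_prod hp hnorm, sum_filter_agreeBelow_prod hp hnorm,
    filter_val_lt_succ_eq_insert a.isLt, prod_insert (by simp)]
  ring

end ChainRule

lemma sum_prod_ite_bool {ι R : Type*} [Fintype ι] [DecidableEq ι] [CommRing R] (q : ι → R) :
    ∑ b : ι → Bool, ∏ i, (if b i = true then q i else 1 - q i) = 1 := by
  rw [← Fintype.prod_sum fun i (c : Bool) => if c = true then q i else 1 - q i]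
  simp

section Hawkes

variable {N T : ℕ} (lam : Fin N → ℝ) (ν : Fin N → Fin N → ℤ → ℝ)

noncomputable def hawkesKernel (u : Fin T) (X : Fin T → Fin N → Bool) (b : Fin N → Bool) : ℝ :=
  ∏ i, if b i = true then sigm (intensity N T lam ν u X i)
    else 1 - sigm (intensity N T lam ν u X i)

lemma hawkesP_eq_prod_hawkesKernel (X : Fin T → Fin N → Bool) :
    hawkesP N T lam ν X = ∏ u, hawkesKernel lam ν u X (X u) := rfl

lemma isCausal_intensity : IsCausal (intensity N T lam ν) := by
  intro u X Y h
  funext i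
  refine congrArg (lam i + ·) (sum_congr rfl fun j _ => sum_congr ?_ fun _ _ => rfl)
  exact filter_congr fun s _ => and_congr_right fun hs => by rw [h s hs]

lemma isCausal_hawkesKernel : IsCausal (hawkesKernel (T := T) lam ν) := by
  intro u X Y h
  unfold hawkesKernel
  rw [isCausal_intensity lam ν u X Y h]

lemma sum_hawkesKernel (u : Fin T) (X : Fin T → Fin N → Bool) :
    ∑ b, hawkesKernel lam ν u X b = 1 :=
  sum_prod_ite_bool _

lemma hawkesKernel_silent (u : Fin T) (X : Fin T → Fin N → Bool) :
    hawkesKernel lam ν u X (fun _ => false) = ∏ i, (1 - sigm (intensity N T lam ν u X i)) := by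
  simp only [hawkesKernel, Bool.false_eq_true, if_false]

end Hawkes

/-- Row `r` of `lagState τ x u` is the event vector `x (u - (r + 1))`: the paper's state seen
just before time index `u`, at lag `r + 1`; lags reaching before time index `0` are silent. -/
def lagState (τ : ℕ) {N : ℕ} (x : ℕ → Fin N → Bool) (u : ℕ) : Matrix (Fin τ) (Fin N) ℤ :=
  Matrix.of fun r c => if (r : ℕ) < u ∧ x (u - (r + 1)) c = true then 1 else 0

section State

variable {τ N : ℕ}

lemma shiftD_mul_apply (M : Matrix (Fin τ) (Fin N) ℤ) (r : Fin τ) (c : Fin N) :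
    (shiftD τ * M) r c = if h : 0 < (r : ℕ) then M ⟨r - 1, by omega⟩ c else 0 := by
  rw [Matrix.mul_apply]
  split_ifs with hr
  · rw [sum_eq_single ⟨r - 1, by omega⟩ (fun s _ hs => ?_) (by simp)]
    · rw [shiftD, Matrix.of_apply, if_pos (by simp; omega), one_mul]
    · rw [shiftD, Matrix.of_apply, if_neg fun h => hs (Fin.ext (by simp; omega)), zero_mul]
  · exact sum_eq_zero fun s _ => by rw [shiftD, Matrix.of_apply, if_neg (by omega), zero_mul]

lemma lagState_succ (x : ℕ → Fin N → Bool) (u : ℕ) {I : Finset (Fin N)}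
    (hI : ∀ c, c ∈ I ↔ x u c = true) :
    lagState τ x (u + 1) = shiftD τ * lagState τ x u + indMat τ N I := by
  ext r c
  rw [Matrix.add_apply, shiftD_mul_apply]
  by_cases hr : (r : ℕ) = 0
  · simp [lagState, indMat, hr, hI]
  · have hsub : u - ((r : ℕ) - 1 + 1) = u + 1 - ((r : ℕ) + 1) := by omega
    have hlt : (r : ℕ) - 1 < u ↔ (r : ℕ) < u + 1 := by omega
    simp [lagState, indMat, hr, Nat.pos_of_ne_zero hr, hsub, hlt]

lemma shiftD_pow_mul_lagState {x : ℕ → Fin N → Bool} {u : ℕ} (j : ℕ)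
    (hx : ∀ n, u ≤ n → n < u + j → x n = fun _ => false) :
    shiftD τ ^ j * lagState τ x u = lagState τ x (u + j) := by
  induction j with
  | zero => simp
  | succ j ih =>
    have hI : ∀ c, c ∈ (∅ : Finset (Fin N)) ↔ x (u + j) c = true := fun c => by
      simp [hx (u + j) (by omega) (by omega)]
    have hzero : indMat τ N ∅ = 0 := by ext; simp [indMat]
    rw [pow_succ', Matrix.mul_assoc, ih fun n h1 h2 => hx n h1 (by omega), ← add_assoc,
      lagState_succ x _ hI, hzero, add_zero]

lemma eta_eq_lagState {x : ℕ → Fin N → Bool} {s k : ℕ} (hk : 1 ≤ k)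
    {S : Matrix (Fin τ) (Fin N) ℤ} (hS : S = lagState τ x s)
    {I : Finset (Fin N)} (hI : ∀ c, c ∈ I ↔ x s c = true)
    (hx : ∀ n, s < n → n < s + k → x n = fun _ => false) :
    eta τ N k S I = lagState τ x (s + k) := by
  rw [eta, hS, ← lagState_succ x s hI,
    shiftD_pow_mul_lagState _ fun n h1 h2 => hx n (by omega) (by omega)]
  congr 1
  omega

lemma intensity_eq_stateIntensity_lagState {T : ℕ} (lam : Fin N → ℝ)
    {ν : Fin N → Fin N → ℤ → ℝ} (hν : ∀ i j t, (t < 1 ∨ (τ : ℤ) < t) → ν i j t = 0)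
    {X : Fin T → Fin N → Bool} {x : ℕ → Fin N → Bool} (hx : ∀ s : Fin T, x s = X s)
    (u : Fin T) (i : Fin N) :
    intensity N T lam ν u X i = stateIntensity τ N lam ν (lagState τ x u) i := by
  refine congrArg (lam i + ·) (sum_congr rfl fun j _ => ?_)
  simp only [lagState, Matrix.of_apply, Int.cast_ite, Int.cast_one, Int.cast_zero, ite_mul,
    one_mul, zero_mul]
  rw [← sum_filter]
  have hlag : ∀ s : Fin T, ν i j ((u : ℤ) - s) ≠ 0 → 1 ≤ (u : ℤ) - s ∧ (u : ℤ) - s ≤ τ :=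
    fun s hs => by by_contra h; exact hs (hν i j _ (by omega))
  refine sum_bij_ne_zero (fun s _ hs => ⟨u - (s + 1), by have := hlag s hs; omega⟩) ?_ ?_ ?_ ?_
  · intro s hs _
    simp only [mem_filter, mem_univ, true_and, Fin.lt_def] at hs ⊢
    refine ⟨by omega, ?_⟩
    rw [show (u : ℕ) - (u - (s + 1) + 1) = s by omega, hx]
    exact hs.2
  · intro s₁ hs₁ _ s₂ hs₂ _ h
    simp only [mem_filter, mem_univ, true_and, Fin.lt_def, Fin.mk.injEq] at hs₁ hs₂ h
    exact Fin.ext (by omega)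
  · intro r hr hνr
    simp only [mem_filter, mem_univ, true_and] at hr
    have hval : ((u : ℕ) - (r + 1) : ℕ) + ((r : ℤ) + 1) = u := by omega
    refine ⟨⟨u - (r + 1), by omega⟩, ?_, ?_, Fin.ext (by simp; omega)⟩
    · simp only [mem_filter, mem_univ, true_and, Fin.lt_def]
      exact ⟨by simp; omega, by rw [← hx]; exact hr.2⟩
    · rwa [← hval, add_sub_cancel_left]
  · intro s hs _
    simp only [mem_filter, mem_univ, true_and, Fin.lt_def] at hs
    congr 1
    push_cast
    omega

end State

lemma prod_filter_window_eq_prod_Icc {M : Type*} [CommMonoid M] {T t a : ℕ} (ha : a ≤ T)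
    {f : Fin T → M} {g : ℕ → M}
    (hfg : ∀ u : Fin T, t ≤ (u : ℕ) → (u : ℕ) < a → f u = g (u + 1 - t)) :
    ∏ u ∈ univ.filter (fun u : Fin T => t ≤ (u : ℕ) ∧ (u : ℕ) < a), f u =
      ∏ j ∈ Icc 1 (a - t), g j := by
  refine prod_nbij (fun u => (u : ℕ) + 1 - t) ?_ ?_ ?_
    fun u hu => hfg u (mem_filter.1 hu).2.1 (mem_filter.1 hu).2.2
  · intro u hu
    simp only [mem_filter, mem_univ, true_and, mem_Icc] at hu ⊢
    omega
  · intro u hu v hv h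
    simp only [coe_filter, mem_univ, true_and, Set.mem_ofPred_eq] at hu hv h
    exact Fin.ext (by omega)
  · intro j hj
    simp only [coe_Icc, Set.mem_Icc] at hj
    exact ⟨⟨t + j - 1, by omega⟩, by simp; omega, by simp; omega⟩

def silentAfter {N T : ℕ} (H : Fin T → Fin N → Bool) (t : ℕ) : ℕ → Fin N → Bool :=
  fun n => if h : n < t ∧ n < T then H ⟨n, h.2⟩ else fun _ => false

section SilentAfter

variable {N T : ℕ} (H : Fin T → Fin N → Bool) {t : ℕ}

lemma silentAfter_of_lt {u : Fin T} (hu : (u : ℕ) < t) : silentAfter H t u = H u := by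
  simp [silentAfter, hu]

lemma silentAfter_of_le {n : ℕ} (hn : t ≤ n) : silentAfter H t n = fun _ => false := by
  simp [silentAfter, show ¬n < t by omega]

lemma lagState_silentAfter_pred {τ : ℕ} (htT : t ≤ T) {S : Matrix (Fin τ) (Fin N) ℤ}
    (hS : ∀ (r : Fin τ) (c : Fin N), S r c =
      if h : (r : ℕ) + 2 ≤ t then (if H ⟨t - (r : ℕ) - 2, by omega⟩ c = true then 1 else 0)
      else 0) :
    S = lagState τ (silentAfter H t) (t - 1) := by
  ext r c
  rw [hS]
  by_cases hr : (r : ℕ) + 2 ≤ t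
  · have hlag : t - 1 - ((r : ℕ) + 1) = t - r - 2 := by omega
    simp [lagState, silentAfter, hr, hlag, show (r : ℕ) < t - 1 by omega,
      show t - r - 2 < t by omega, show t - r - 2 < T by omega]
  · simp [lagState, hr, show ¬(r : ℕ) < t - 1 by omega]

end SilentAfter

lemma filter_firstArrival_eq {N T t a : ℕ} (ha : a < T) (hta : t ≤ a)
    (H : Fin T → Fin N → Bool) :
    univ.filter (fun X : Fin T → Fin N → Bool => (∀ u : Fin T, (u : ℕ) < t → X u = H u) ∧
        (∀ u : Fin T, t ≤ (u : ℕ) → (u : ℕ) < a → ∀ i, X u i = false) ∧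
        ∃ i, X ⟨a, ha⟩ i = true) =
      univ.filter (fun X : Fin T → Fin N → Bool =>
        (∀ u : Fin T, (u : ℕ) < ((⟨a, ha⟩ : Fin T) : ℕ) → X u = silentAfter H t u) ∧
          X ⟨a, ha⟩ ≠ silentAfter H t (⟨a, ha⟩ : Fin T)) := by
  refine filter_congr fun X _ => ?_
  rw [silentAfter_of_le H hta]
  constructor
  · rintro ⟨hH, hsilent, i, hi⟩
    refine ⟨fun u hu => ?_, fun h => by simp [h] at hi⟩
    by_cases hut : (u : ℕ) < t
    · rw [hH u hut, silentAfter_of_lt H hut]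
    · rw [silentAfter_of_le H (by omega)]
      exact funext (hsilent u (by omega) hu)
  · rintro ⟨hZ, harr⟩
    refine ⟨fun u hu => (hZ u (by simp; omega)).trans (silentAfter_of_lt H hu),
      fun u hu1 hu2 i => by rw [hZ u hu2, silentAfter_of_le H hu1], ?_⟩
    by_contra! h
    exact harr (funext fun i => by simpa using h i)

open Classical in
/-- **Conditional inter-arrival distribution of the Hawkes process** (equation (16) of the
paper).  Times `1,…,T` are indexed by `Fin T` (index `u` standing for time `u+1`).  Given a
history `H` over times `1,…,t` of positive probability, with spiking set `I ≠ ∅` at time `t`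
and pre-event state `S` (`S r c = H_c(t − r)` for `1 ≤ r ≤ τ`, zero for `t − r ≤ 0`), the
conditional probability that the first arrival after time `t` occurs at time `t + ΔT` is
`(∏_i ∏_{j=1}^{ΔT−1} (1 − σ(Λ^{(i)}(η(j,S,I))))) · (1 − ∏_i (1 − σ(Λ^{(i)}(η(ΔT,S,I)))))`. -/
theorem stmt_5 (τ N T : ℕ)
    (lam : Fin N → ℝ)
    (ν : Fin N → Fin N → ℤ → ℝ) (hν : ∀ i j t, (t < 1 ∨ (τ : ℤ) < t) → ν i j t = 0)
    (t ΔT : ℕ) (ht : 1 ≤ t) (hΔT : 1 ≤ ΔT) (htT : t + ΔT ≤ T)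
    (H : Fin T → Fin N → Bool)
    (I : Finset (Fin N))
    (hIdef : ∀ i : Fin N, i ∈ I ↔ H ⟨t - 1, by omega⟩ i = true)
    (S : Matrix (Fin τ) (Fin N) ℤ)
    (hS : ∀ (r : Fin τ) (c : Fin N), S r c =
      if h : (r : ℕ) + 2 ≤ t then (if H ⟨t - (r : ℕ) - 2, by omega⟩ c = true then 1 else 0)
      else 0)
    (hpos : 0 < ∑ X ∈ Finset.univ.filter
        (fun X : Fin T → Fin N → Bool => ∀ u : Fin T, (u : ℕ) < t → X u = H u),
        hawkesP N T lam ν X) :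
    (∑ X ∈ Finset.univ.filter (fun X : Fin T → Fin N → Bool =>
        (∀ u : Fin T, (u : ℕ) < t → X u = H u) ∧
        (∀ u : Fin T, t ≤ (u : ℕ) → (u : ℕ) < t + ΔT - 1 → ∀ i, X u i = false) ∧
        (∃ i, X ⟨t + ΔT - 1, by omega⟩ i = true)), hawkesP N T lam ν X) /
      (∑ X ∈ Finset.univ.filter
        (fun X : Fin T → Fin N → Bool => ∀ u : Fin T, (u : ℕ) < t → X u = H u),
        hawkesP N T lam ν X) =
    (∏ i : Fin N, ∏ j ∈ Finset.Icc 1 (ΔT - 1),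
        (1 - sigm (stateIntensity τ N lam ν (eta τ N j S I) i))) *
      (1 - ∏ i : Fin N, (1 - sigm (stateIntensity τ N lam ν (eta τ N ΔT S I) i))) := by
  set Z : Fin T → Fin N → Bool := fun u => silentAfter H t u
  have hsilent : ∀ u : Fin T, t ≤ (u : ℕ) → (u : ℕ) < t + ΔT →
      hawkesKernel lam ν u Z (Z u) =
        ∏ i, (1 - sigm (stateIntensity τ N lam ν (eta τ N (u + 1 - t) S I) i)) := by
    intro u hu1 hu2
    have hI : ∀ c, c ∈ I ↔ silentAfter H t (t - 1) c = true := fun c => by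
      rw [hIdef, silentAfter_of_lt H (u := ⟨t - 1, by omega⟩) (by simp; omega)]
    rw [show Z u = _ from silentAfter_of_le H hu1, hawkesKernel_silent,
      eta_eq_lagState (by omega) (lagState_silentAfter_pred H (by omega) hS) hI
        fun n h1 _ => silentAfter_of_le H (by omega),
      show t - 1 + (u + 1 - t) = u by omega]
    simp only [intensity_eq_stateIntensity_lagState lam hν (x := silentAfter H t) (X := Z)
      fun _ => rfl]
  have hcausal := isCausal_hawkesKernel (T := T) lam ν
  have hnorm := sum_hawkesKernel (T := T) lam ν
  have ha : ((⟨t + ΔT - 1, by omega⟩ : Fin T) : ℕ) = t + ΔT - 1 := rfl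
  simp only [hawkesP_eq_prod_hawkesKernel] at hpos ⊢
  rw [sum_filter_agreeBelow_prod hcausal hnorm] at hpos ⊢
  rw [filter_firstArrival_eq (by omega) (by omega), sum_filter_agreeBelow_ne hcausal hnorm,
    ← prod_filter_val_lt_mul_prod_filter (t := t) (by omega),
    prod_filter_val_lt_congr hcausal fun u hu => silentAfter_of_lt H hu,
    mul_assoc, mul_div_cancel_left₀ _ hpos.ne', prod_comm,
    prod_filter_window_eq_prod_Icc (by omega)
      (g := fun j => ∏ i, (1 - sigm (stateIntensity τ N lam ν (eta τ N j S I) i)))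
      fun u h1 h2 => hsilent u h1 (by omega),
    hsilent _ (by omega) (by omega), ha, show t + ΔT - 1 - t = ΔT - 1 by omega,
    show t + ΔT - 1 + 1 - t = ΔT by omega]
end

section
/- Consider the directed graph G on the vertex set 𝒮 = {0,1}^{τ×N} with the following edges: for every S ∈ 𝒮, an edge from S to the all-zero matrix O; and for every S ∈ 𝒮, every ΔT ∈ {1,…,τ} and every nonempty subset I ⊆ {1,…,N}, an edge from S to η(ΔT, S, I). Then G is strongly connected: for every pair of states S, S' ∈ 𝒮 there is a directed path in G from S to S'. -/
/-!
Every state has an edge to `O`, so it suffices to reach an arbitrary binary state `T ≠ O`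
from `O`. If `j` is the first nonzero row of `T`, then `T = η(j + 1, P, I)`, where `I` is the
support of row `j` and `P` is `T` with its first `j + 1` rows removed and the remaining rows
moved up. If `T` vanishes from row `h` on, then `P` vanishes from row `h - j - 1` on, so
induction on `h` builds `T` from `O` one edge at a time.
-/

open Finset

/-- The edge relation of the transition graph `G` on states: from every state there is an
edge to the all-zero matrix `O`, and for every `ΔT ∈ {1,…,τ}` and every nonempty
`I ⊆ {1,…,N}` there is an edge to `η(ΔT, S, I)`. -/
def stepRel (τ N : ℕ) (S S' : Matrix (Fin τ) (Fin N) ℤ) : Prop :=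
  S' = 0 ∨ ∃ ΔT : ℕ, 1 ≤ ΔT ∧ ΔT ≤ τ ∧ ∃ I : Finset (Fin N), I.Nonempty ∧
    S' = eta τ N ΔT S I

lemma shiftD_pow_mul_apply {τ : ℕ} {n : Type*} (m : ℕ) (M : Matrix (Fin τ) n ℤ) (r : Fin τ)
    (c : n) :
    (shiftD τ ^ m * M) r c = if h : m ≤ (r : ℕ) then M ⟨r - m, by omega⟩ c else 0 := by
  induction m generalizing r with
  | zero => simp
  | succ m ih =>
    rw [pow_succ', Matrix.mul_assoc, Matrix.mul_apply]
    by_cases h : 1 ≤ (r : ℕ)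
    · rw [Finset.sum_eq_single ⟨r - 1, by omega⟩, ih]
      · simp only [shiftD, Matrix.of_apply, if_pos (show (r : ℕ) = r - 1 + 1 by omega), one_mul]
        by_cases hm : m + 1 ≤ (r : ℕ)
        · rw [dif_pos (by simpa using (by omega : m ≤ (r : ℕ) - 1)), dif_pos hm]
          congr 2
          omega
        · rw [dif_neg (by simp; omega), dif_neg hm]
      · intro b _ hb
        have : (r : ℕ) ≠ b + 1 := fun h' => hb (Fin.ext (by simp; omega))
        simp [shiftD, this]
      · simp
    · rw [dif_neg (by omega)]
      exact Finset.sum_eq_zero fun b _ => by simp [shiftD]; omega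

def shiftUp {τ : ℕ} {n : Type*} (T : Matrix (Fin τ) n ℤ) (k : ℕ) : Matrix (Fin τ) n ℤ :=
  Matrix.of fun r c => if h : (r : ℕ) + k < τ then T ⟨r + k, h⟩ c else 0

def IsBinary {m n : Type*} (T : Matrix m n ℤ) : Prop :=
  ∀ r c, T r c = 0 ∨ T r c = 1

lemma IsBinary.shiftUp {τ : ℕ} {n : Type*} {T : Matrix (Fin τ) n ℤ} (hT : IsBinary T)
    (k : ℕ) :
    IsBinary (shiftUp T k) := fun r c => by
  simp only [_root_.shiftUp, Matrix.of_apply]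
  split_ifs
  exacts [hT _ _, Or.inl rfl]

def rowSupport {τ N : ℕ} (T : Matrix (Fin τ) (Fin N) ℤ) (j : Fin τ) : Finset (Fin N) :=
  univ.filter (T j · ≠ 0)

lemma eta_shiftUp_rowSupport {τ N : ℕ} {T : Matrix (Fin τ) (Fin N) ℤ} (hT : IsBinary T)
    (j : Fin τ) (hzero : ∀ r < j, ∀ c, T r c = 0) :
    eta τ N (j + 1) (shiftUp T (j + 1)) (rowSupport T j) = T := by
  ext r c
  rw [eta, Nat.add_sub_cancel, shiftD_pow_mul_apply]
  obtain hrj | rfl | hjr := lt_trichotomy r j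
  · rw [dif_neg (by omega)]
    exact (hzero r hrj c).symm
  all_goals
    rw [dif_pos (by omega), Matrix.add_apply, ← pow_one (shiftD τ), shiftD_pow_mul_apply]
  · rcases hT r c with h | h <;> simp [indMat, rowSupport, h]
  · have hr : (r : ℕ) - j - 1 + (j + 1) = r := by omega
    simp only [shiftUp, indMat, Matrix.of_apply, hr]
    simp [show 1 ≤ (r : ℕ) - j by omega, show (r : ℕ) - j ≠ 0 by omega]

lemma stepRel_shiftUp_of_first_nonzero_row {τ N : ℕ} {T : Matrix (Fin τ) (Fin N) ℤ}
    (hT : IsBinary T) {j : Fin τ} {c : Fin N} (hc : T j c ≠ 0)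
    (hzero : ∀ r < j, ∀ c, T r c = 0) :
    stepRel τ N (shiftUp T (j + 1)) T :=
  Or.inr ⟨j + 1, by omega, j.2, rowSupport T j, ⟨c, by simpa [rowSupport] using hc⟩,
    (eta_shiftUp_rowSupport hT j hzero).symm⟩

lemma IsBinary.reflTransGen_stepRel_zero {τ N : ℕ} {T : Matrix (Fin τ) (Fin N) ℤ}
    (hT : IsBinary T) : Relation.ReflTransGen (stepRel τ N) 0 T := by
  suffices ∀ h : ℕ, ∀ T : Matrix (Fin τ) (Fin N) ℤ, IsBinary T →
      (∀ r : Fin τ, h ≤ r → ∀ c, T r c = 0) →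
      Relation.ReflTransGen (stepRel τ N) 0 T from
    this τ T hT fun r hr => absurd r.2 (by omega)
  intro h
  induction h with
  | zero =>
    intro T _ hvanish
    rw [show T = 0 from Matrix.ext fun r c => hvanish r (Nat.zero_le _) c]
  | succ h ih =>
    intro T hT hvanish
    by_cases hT0 : T = 0
    · rw [hT0]
    obtain ⟨r, c, hrc⟩ : ∃ r c, T r c ≠ 0 := by
      by_contra! hall
      exact hT0 (Matrix.ext hall)
    obtain ⟨j, ⟨c, hc⟩, hmin⟩ :=
      WellFounded.has_min wellFounded_lt {j | ∃ c, T j c ≠ 0} ⟨r, c, hrc⟩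
    have hzero : ∀ r < j, ∀ c, T r c = 0 := fun r hr c => by
      by_contra hrc
      exact hmin r ⟨c, hrc⟩ hr
    refine .tail (ih _ (hT.shiftUp _) fun r hr c => ?_)
      (stepRel_shiftUp_of_first_nonzero_row hT hc hzero)
    simp only [_root_.shiftUp, Matrix.of_apply]
    split_ifs
    · exact hvanish _ (by simp only; omega) c
    · rfl

theorem stmt_9_general (τ N : ℕ)
    (S S' : Matrix (Fin τ) (Fin N) ℤ)
    (hS' : ∀ r c, S' r c = 0 ∨ S' r c = 1) :
    Relation.ReflTransGen (stepRel τ N) S S' :=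
  .head (Or.inl rfl) (IsBinary.reflTransGen_stepRel_zero hS')

/-- **Strong connectivity of the transition graph (irreducibility, Corollary 1 of the
paper).**  For every pair of binary states `S, S'` there is a directed path in `G`
from `S` to `S'`. -/
theorem stmt_9 (τ N : ℕ) (hτ : 1 ≤ τ) (hN : 1 ≤ N)
    (S S' : Matrix (Fin τ) (Fin N) ℤ)
    (hS : ∀ r c, S r c = 0 ∨ S r c = 1) (hS' : ∀ r c, S' r c = 0 ∨ S' r c = 1) :
    Relation.ReflTransGen (stepRel τ N) S S' :=
  stmt_9_general τ N S S' hS'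
end
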